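/- arXiv:1809.04693 — 8 statements merged into one kernel-verified Lean document; each statement's English description precedes it below -/
import Mathlib

section
/- If F₁ is α₁-averaged and F₂ is α₂-averaged with α₁, α₂ ∈ (0,1), then the composition F₂ ∘ F₁ is α-averaged with α = (α₁ + α₂ - 2α₁α₂)/(1 - α₁α₂), and α ∈ (0,1). -/
def Nonexpansive {n : ℕ} (F : EuclideanSpace ℝ (Fin n) → EuclideanSpace ℝ (Fin n)) : Prop :=
  ∀ x y, ‖F x - F y‖ ≤ ‖x - y‖

def Averaged {n : ℕ} (α : ℝ) (D : EuclideanSpace ℝ (Fin n) → EuclideanSpace ℝ (Fin n)) : Prop :=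
  ∃ F, Nonexpansive F ∧ ∀ x, D x = (1 - α) • x + α • F x

open scoped RealInnerProductSpace

lemma averaged_iff_aux {n : ℕ} {α : ℝ} (hα : α ∈ Set.Ioo (0:ℝ) 1)
    (D : EuclideanSpace ℝ (Fin n) → EuclideanSpace ℝ (Fin n)) :
    Averaged α D ↔ ∀ x y, ‖D x - D y‖^2 + (1-α)/α * ‖(x - D x) - (y - D y)‖^2 ≤ ‖x - y‖^2 := by
  obtain ⟨hα0, hα1⟩ := hα
  constructor
  · rintro ⟨F, hF, hD⟩ x y
    have e1 : D x - D y = (1-α) • (x - y) + α • (F x - F y) := by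
      rw [hD, hD]; module
    have e2 : (x - D x) - (y - D y) = α • ((x - y) - (F x - F y)) := by
      rw [hD, hD]; module
    set v := x - y
    set w := F x - F y
    have hw : ‖w‖ ≤ ‖v‖ := hF x y
    have hw2 : ‖w‖^2 ≤ ‖v‖^2 := by nlinarith [norm_nonneg w, norm_nonneg v]
    rw [e1, e2]
    have hn1 : ‖(1-α) • v + α • w‖^2
        = (1-α)^2 * ‖v‖^2 + 2*((1-α)*α*⟪v,w⟫) + α^2*‖w‖^2 := by
      rw [norm_add_sq_real, norm_smul, norm_smul, real_inner_smul_left, real_inner_smul_right,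
        Real.norm_eq_abs, Real.norm_eq_abs, abs_of_pos hα0, abs_of_pos (by linarith : (0:ℝ) < 1-α)]
      ring
    have hn2 : ‖α • (v - w)‖^2 = α^2 * (‖v‖^2 - 2*⟪v,w⟫ + ‖w‖^2) := by
      rw [norm_smul, Real.norm_eq_abs, abs_of_pos hα0, mul_pow, norm_sub_sq_real]
    rw [hn1, hn2]
    have hdiv : (1-α)/α * (α^2 * (‖v‖^2 - 2*⟪v,w⟫ + ‖w‖^2))
        = α*(1-α) * (‖v‖^2 - 2*⟪v,w⟫ + ‖w‖^2) := by
      field_simp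
    rw [hdiv]
    nlinarith [hw2]
  · intro h
    refine ⟨fun x => α⁻¹ • (D x - (1-α) • x), ?_, ?_⟩
    · intro x y
      have e : α⁻¹ • (D x - (1-α) • x) - α⁻¹ • (D y - (1-α) • y)
          = α⁻¹ • ((D x - D y) - (1-α) • (x - y)) := by module
      rw [e, norm_smul, Real.norm_eq_abs, abs_of_pos (inv_pos.mpr hα0)]
      rw [inv_mul_le_iff₀ hα0]
      have hsq : ‖(D x - D y) - (1-α) • (x - y)‖^2 ≤ (α * ‖x - y‖)^2 := by
        have h0 := mul_le_mul_of_nonneg_left (h x y) hα0.le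
        have e2 : α * (‖D x - D y‖^2 + (1-α)/α * ‖(x - D x) - (y - D y)‖^2)
            = α * ‖D x - D y‖^2 + (1-α) * ‖(x - D x) - (y - D y)‖^2 := by
          field_simp
        rw [e2] at h0
        have e3 : (x - D x) - (y - D y) = (x - y) - (D x - D y) := by module
        rw [e3] at h0
        set u := D x - D y
        set v := x - y
        have hn1 : ‖u - (1-α) • v‖^2 = ‖u‖^2 - 2*((1-α)*⟪u,v⟫) + (1-α)^2*‖v‖^2 := by
          rw [norm_sub_sq_real, norm_smul, real_inner_smul_right, Real.norm_eq_abs,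
            abs_of_pos (by linarith : (0:ℝ) < 1-α)]
          ring
        have hn2 : ‖v - u‖^2 = ‖v‖^2 - 2*⟪u,v⟫ + ‖u‖^2 := by
          rw [norm_sub_sq_real, real_inner_comm]
        rw [hn2] at h0
        rw [hn1, mul_pow]
        nlinarith [h0]
      have h1 := Real.sqrt_le_sqrt hsq
      rwa [Real.sqrt_sq (norm_nonneg _), Real.sqrt_sq (by positivity)] at h1
    · intro x
      rw [smul_smul, mul_inv_cancel₀ hα0.ne', one_smul]
      module

lemma weighted_norm_add {n : ℕ} (p q : ℝ) (hp : 0 < p) (hq : 0 < q)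
    (a b : EuclideanSpace ℝ (Fin n)) :
    p*q*‖a+b‖^2 ≤ (p+q)*(p*‖a‖^2 + q*‖b‖^2) := by
  have h := real_inner_le_norm a b
  have hn := norm_add_sq_real a b
  nlinarith [sq_nonneg (p*‖a‖ - q*‖b‖), mul_pos hp hq, norm_nonneg a, norm_nonneg b,
    mul_le_mul_of_nonneg_left h (le_of_lt (mul_pos hp hq))]

theorem averaged_comp {n : ℕ} (α₁ α₂ : ℝ) (hα₁ : α₁ ∈ Set.Ioo (0:ℝ) 1)
    (hα₂ : α₂ ∈ Set.Ioo (0:ℝ) 1)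
    (F₁ F₂ : EuclideanSpace ℝ (Fin n) → EuclideanSpace ℝ (Fin n))
    (h₁ : Averaged α₁ F₁) (h₂ : Averaged α₂ F₂) :
    (α₁ + α₂ - 2*α₁*α₂)/(1 - α₁*α₂) ∈ Set.Ioo (0:ℝ) 1 ∧
      Averaged ((α₁ + α₂ - 2*α₁*α₂)/(1 - α₁*α₂)) (F₂ ∘ F₁) := by
  obtain ⟨ha0, ha1⟩ := hα₁
  obtain ⟨hb0, hb1⟩ := hα₂
  have hN : 0 < α₁ + α₂ - 2*α₁*α₂ := by nlinarith
  have hD : 0 < 1 - α₁*α₂ := by nlinarith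
  have hNltD : α₁ + α₂ - 2*α₁*α₂ < 1 - α₁*α₂ := by nlinarith
  have hIoo : (α₁ + α₂ - 2*α₁*α₂)/(1 - α₁*α₂) ∈ Set.Ioo (0:ℝ) 1 := by
    constructor
    · positivity
    · rw [div_lt_one hD]; exact hNltD
  refine ⟨hIoo, ?_⟩
  rw [averaged_iff_aux hIoo]
  intro x y
  have k₁ := (averaged_iff_aux ⟨ha0, ha1⟩ F₁).mp h₁ x y
  have k₂ := (averaged_iff_aux ⟨hb0, hb1⟩ F₂).mp h₂ (F₁ x) (F₁ y)
  set a := (x - F₁ x) - (y - F₁ y) with ha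
  set b := (F₁ x - F₂ (F₁ x)) - (F₁ y - F₂ (F₁ y)) with hb
  have hab : (x - (F₂ ∘ F₁) x) - (y - (F₂ ∘ F₁) y) = a + b := by
    simp only [Function.comp_apply, ha, hb]; module
  have hcomp : (F₂ ∘ F₁) x - (F₂ ∘ F₁) y = F₂ (F₁ x) - F₂ (F₁ y) := rfl
  rw [hab, hcomp]
  -- key weighted inequality
  have hw := weighted_norm_add (α₂*(1-α₁)) (α₁*(1-α₂))
    (by nlinarith) (by nlinarith) a b
  have key : (1 - (α₁ + α₂ - 2*α₁*α₂)/(1 - α₁*α₂))/((α₁ + α₂ - 2*α₁*α₂)/(1 - α₁*α₂)) * ‖a+b‖^2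
      ≤ (1-α₁)/α₁ * ‖a‖^2 + (1-α₂)/α₂ * ‖b‖^2 := by
    have hαeq : (1 - (α₁ + α₂ - 2*α₁*α₂)/(1 - α₁*α₂))/((α₁ + α₂ - 2*α₁*α₂)/(1 - α₁*α₂))
        = ((1-α₁)*(1-α₂))/(α₁ + α₂ - 2*α₁*α₂) := by
      field_simp
      ring
    have e : (1-α₁)/α₁ * ‖a‖^2 + (1-α₂)/α₂ * ‖b‖^2
        = (α₂*(1-α₁)*‖a‖^2 + α₁*(1-α₂)*‖b‖^2)/(α₁*α₂) := by
      field_simp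
    rw [hαeq, e, div_mul_eq_mul_div, div_le_div_iff₀ hN (mul_pos ha0 hb0)]
    nlinarith [hw]
  calc ‖F₂ (F₁ x) - F₂ (F₁ y)‖^2
        + (1 - (α₁ + α₂ - 2*α₁*α₂)/(1 - α₁*α₂))/((α₁ + α₂ - 2*α₁*α₂)/(1 - α₁*α₂)) * ‖a+b‖^2
      ≤ ‖F₂ (F₁ x) - F₂ (F₁ y)‖^2 + (1-α₁)/α₁ * ‖a‖^2 + (1-α₂)/α₂ * ‖b‖^2 := by linarith
    _ ≤ ‖F₁ x - F₁ y‖^2 + (1-α₁)/α₁ * ‖a‖^2 := by linarith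
    _ ≤ ‖x - y‖^2 := by linarith
end

section
/- Let d be convex and differentiable with L-Lipschitz gradient, and let D be a θ-averaged operator with θ ∈ (0,1). Suppose the operator P(x) = D(x - γ∇d(x)) has a fixed point x*. For the iteration x^k = P(x^{k-1}) with step γ ∈ (0, 1/L] and any t ≥ 1, one has (1/t)·Σ_{k=1}^t ‖x^{k-1} - P(x^{k-1})‖² ≤ (2/t)·((1+θ)/(1-θ))·‖x⁰ - x*‖². -/
open RealInnerProductSpace
set_option maxHeartbeats 1000000

variable {n : ℕ}

lemma line_hasDerivAt (d : EuclideanSpace ℝ (Fin n) → ℝ)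
    (d' : EuclideanSpace ℝ (Fin n) → EuclideanSpace ℝ (Fin n))
    (hgrad : ∀ x, HasGradientAt d (d' x) x)
    (x v : EuclideanSpace ℝ (Fin n)) (s : ℝ) :
    HasDerivAt (fun s : ℝ => d (x + s • v)) ⟪d' (x + s • v), v⟫ s := by
  have h1 : HasDerivAt (fun s : ℝ => x + s • v) v s := by
    simpa using ((hasDerivAt_id s).smul_const v).const_add x
  have h2 := (hgrad (x + s • v)).hasFDerivAt.comp_hasDerivAt s h1
  exact h2

lemma grad_ineq (d : EuclideanSpace ℝ (Fin n) → ℝ)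
    (d' : EuclideanSpace ℝ (Fin n) → EuclideanSpace ℝ (Fin n))
    (hconv : ConvexOn ℝ Set.univ d)
    (hgrad : ∀ x, HasGradientAt d (d' x) x)
    (x y : EuclideanSpace ℝ (Fin n)) :
    d x + ⟪d' x, y - x⟫ ≤ d y := by
  set φ : ℝ → ℝ := fun s => d (x + s • (y - x)) with hφ
  have hφconv : ConvexOn ℝ Set.univ φ := by
    have := hconv.comp_affineMap (AffineMap.lineMap x y : ℝ →ᵃ[ℝ] EuclideanSpace ℝ (Fin n))
    rw [Set.preimage_univ] at this
    have e : φ = d ∘ AffineMap.lineMap x y := by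
      funext s
      simp [hφ, AffineMap.lineMap_apply, add_comm]
    rw [e]; exact this
  have hder : HasDerivAt φ ⟪d' (x + (0:ℝ) • (y - x)), y - x⟫ 0 :=
    line_hasDerivAt d d' hgrad x (y - x) 0
  simp only [zero_smul, add_zero] at hder
  have h := hφconv.le_slope_of_hasDerivAt (Set.mem_univ 0) (Set.mem_univ 1) one_pos hder
  rw [slope_def_field] at h
  simp only [div_one, sub_zero] at h
  have h0 : φ 0 = d x := by simp [hφ]
  have h1 : φ 1 = d y := by simp [hφ]
  rw [h0, h1] at h
  · linarith

lemma descent_lemma (d : EuclideanSpace ℝ (Fin n) → ℝ)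
    (d' : EuclideanSpace ℝ (Fin n) → EuclideanSpace ℝ (Fin n))
    (hgrad : ∀ x, HasGradientAt d (d' x) x)
    (L : ℝ) (hL : 0 < L)
    (hlip : ∀ x y, ‖d' x - d' y‖ ≤ L * ‖x - y‖)
    (x y : EuclideanSpace ℝ (Fin n)) :
    d y ≤ d x + ⟪d' x, y - x⟫ + L / 2 * ‖y - x‖ ^ 2 := by
  set v := y - x with hv
  set ψ : ℝ → ℝ := fun s => d (x + s • v) - s * ⟪d' x, v⟫ - L / 2 * s ^ 2 * ‖v‖ ^ 2 with hψ
  have hder : ∀ s : ℝ, HasDerivAt ψ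
      (⟪d' (x + s • v), v⟫ - ⟪d' x, v⟫ - L * s * ‖v‖ ^ 2) s := by
    intro s
    have h1 := line_hasDerivAt d d' hgrad x v s
    have h2 : HasDerivAt (fun s : ℝ => s * ⟪d' x, v⟫) ⟪d' x, v⟫ s := by
      simpa using (hasDerivAt_id s).mul_const ⟪d' x, v⟫
    have h3 : HasDerivAt (fun s : ℝ => L / 2 * s ^ 2 * ‖v‖ ^ 2) (L * s * ‖v‖ ^ 2) s := by
      have := ((hasDerivAt_pow 2 s).const_mul (L / 2)).mul_const (‖v‖ ^ 2)
      exact this.congr_deriv (by rw [show (2:ℕ) - 1 = 1 from rfl, pow_one]; ring)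
    exact (h1.sub h2).sub h3
  have hmono : AntitoneOn ψ (Set.Icc 0 1) := by
    apply antitoneOn_of_deriv_nonpos (convex_Icc 0 1)
    · exact fun s _ => ((hder s).continuousAt).continuousWithinAt
    · exact fun s _ => ((hder s).differentiableAt).differentiableWithinAt
    · intro s hs
      rw [interior_Icc] at hs
      rw [(hder s).deriv]
      have hcs : ⟪d' (x + s • v) - d' x, v⟫ ≤ ‖d' (x + s • v) - d' x‖ * ‖v‖ :=
        real_inner_le_norm _ _
      have hlipb : ‖d' (x + s • v) - d' x‖ ≤ L * (s * ‖v‖) := by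
        have := hlip (x + s • v) x
        simpa [norm_smul, abs_of_pos hs.1] using this
      have hv0 : (0:ℝ) ≤ ‖v‖ := norm_nonneg _
      have : ⟪d' (x + s • v), v⟫ - ⟪d' x, v⟫ ≤ L * s * ‖v‖ ^ 2 := by
        rw [← inner_sub_left]
        calc ⟪d' (x + s • v) - d' x, v⟫ ≤ ‖d' (x + s • v) - d' x‖ * ‖v‖ := hcs
          _ ≤ L * (s * ‖v‖) * ‖v‖ := by gcongr
          _ = L * s * ‖v‖ ^ 2 := by ring
      linarith
  have h01 := hmono (Set.mem_Icc.2 ⟨le_refl 0, zero_le_one⟩)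
    (Set.mem_Icc.2 ⟨zero_le_one, le_refl 1⟩) zero_le_one
  have h0 : ψ 0 = d x := by simp [hψ]
  have h1 : ψ 1 = d y - ⟪d' x, v⟫ - L / 2 * ‖v‖ ^ 2 := by simp [hψ, hv]
  rw [h0, h1] at h01
  rw [hv] at *
  linarith

lemma strong_grad_ineq (d : EuclideanSpace ℝ (Fin n) → ℝ)
    (d' : EuclideanSpace ℝ (Fin n) → EuclideanSpace ℝ (Fin n))
    (hconv : ConvexOn ℝ Set.univ d)
    (hgrad : ∀ x, HasGradientAt d (d' x) x)
    (L : ℝ) (hL : 0 < L)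
    (hlip : ∀ x y, ‖d' x - d' y‖ ≤ L * ‖x - y‖)
    (x y : EuclideanSpace ℝ (Fin n)) :
    d x + ⟪d' x, y - x⟫ + 1 / (2 * L) * ‖d' y - d' x‖ ^ 2 ≤ d y := by
  set Δ := d' y - d' x with hΔ
  set z := y - (1 / L) • Δ with hz
  have h1 := grad_ineq d d' hconv hgrad x z
  have h2 := descent_lemma d d' hgrad L hL hlip y z
  have e1 : ⟪d' x, z - x⟫ = ⟪d' x, y - x⟫ - (1 / L) * ⟪d' x, Δ⟫ := by
    rw [hz]
    rw [show y - (1 / L) • Δ - x = (y - x) - (1 / L) • Δ by abel]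
    rw [inner_sub_right, real_inner_smul_right]
  have e2 : ⟪d' y, z - y⟫ = -(1 / L) * ⟪d' y, Δ⟫ := by
    rw [hz]
    rw [show y - (1 / L) • Δ - y = -((1 / L) • Δ) by abel]
    rw [inner_neg_right, real_inner_smul_right]
    ring
  have e3 : ‖z - y‖ ^ 2 = (1 / L) ^ 2 * ‖Δ‖ ^ 2 := by
    rw [hz, show y - (1 / L) • Δ - y = -((1 / L) • Δ) by abel]
    rw [norm_neg, norm_smul, Real.norm_of_nonneg (by positivity : (0:ℝ) ≤ 1 / L)]
    ring
  have e4 : ⟪d' y, Δ⟫ - ⟪d' x, Δ⟫ = ‖Δ‖ ^ 2 := by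
    rw [← inner_sub_left, ← hΔ, real_inner_self_eq_norm_sq]
  rw [e1] at h1
  rw [e2, e3] at h2
  have hL2 : L / 2 * ((1 / L) ^ 2 * ‖Δ‖ ^ 2) = 1 / (2 * L) * ‖Δ‖ ^ 2 := by
    field_simp
  have e5 : 1/(2*L) * ⟪d' y, Δ⟫ - 1/(2*L) * ⟪d' x, Δ⟫ = 1/(2*L) * ‖Δ‖ ^ 2 := by
    rw [← mul_sub, e4]
  have hc : 1 / L = 2 * (1 / (2 * L)) := by field_simp
  rw [hL2] at h2
  rw [hc] at h1 h2
  linarith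

lemma cocoercive (d : EuclideanSpace ℝ (Fin n) → ℝ)
    (d' : EuclideanSpace ℝ (Fin n) → EuclideanSpace ℝ (Fin n))
    (hconv : ConvexOn ℝ Set.univ d)
    (hgrad : ∀ x, HasGradientAt d (d' x) x)
    (L : ℝ) (hL : 0 < L)
    (hlip : ∀ x y, ‖d' x - d' y‖ ≤ L * ‖x - y‖)
    (x y : EuclideanSpace ℝ (Fin n)) :
    1 / L * ‖d' x - d' y‖ ^ 2 ≤ ⟪x - y, d' x - d' y⟫ := by
  have h1 := strong_grad_ineq d d' hconv hgrad L hL hlip x y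
  have h2 := strong_grad_ineq d d' hconv hgrad L hL hlip y x
  have e1 : ⟪d' x, y - x⟫ + ⟪d' y, x - y⟫ = -⟪x - y, d' x - d' y⟫ := by
    simp only [inner_sub_left, inner_sub_right]
    rw [real_inner_comm x (d' x), real_inner_comm y (d' x),
      real_inner_comm x (d' y), real_inner_comm y (d' y)]
    ring
  have e2 : ‖d' y - d' x‖ = ‖d' x - d' y‖ := by rw [norm_sub_rev]
  rw [e2] at h1
  have hc : 1 / L = 2 * (1 / (2 * L)) := by field_simp
  rw [hc]
  linarith

lemma key_step (d : EuclideanSpace ℝ (Fin n) → ℝ)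
    (d' : EuclideanSpace ℝ (Fin n) → EuclideanSpace ℝ (Fin n))
    (hconv : ConvexOn ℝ Set.univ d)
    (hgrad : ∀ x, HasGradientAt d (d' x) x)
    (L : ℝ) (hL : 0 < L)
    (hlip : ∀ x y, ‖d' x - d' y‖ ≤ L * ‖x - y‖)
    (θ : ℝ) (hθ : θ ∈ Set.Ioo (0:ℝ) 1)
    (D : EuclideanSpace ℝ (Fin n) → EuclideanSpace ℝ (Fin n)) (hD : Averaged θ D)
    (γ : ℝ) (hγ : γ ∈ Set.Ioc 0 (1/L))
    (P : EuclideanSpace ℝ (Fin n) → EuclideanSpace ℝ (Fin n))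
    (hP : ∀ x, P x = D (x - γ • d' x))
    (xstar : EuclideanSpace ℝ (Fin n)) (hfix : P xstar = xstar)
    (z : EuclideanSpace ℝ (Fin n)) :
    ‖P z - xstar‖ ^ 2 + (1 - θ) * ‖z - P z‖ ^ 2 ≤ ‖z - xstar‖ ^ 2 := by
  obtain ⟨hθ0, hθ1⟩ := hθ
  obtain ⟨hγ0, hγ1⟩ := hγ
  obtain ⟨F, hF, hDF⟩ := hD
  set p := z - γ • d' z with hp
  set q := xstar - γ • d' xstar with hq
  set Δ := d' z - d' xstar with hΔ
  set w := γ • Δ with hw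
  set B : ℝ := 2 / (γ * L) - 1 with hBdef
  have hγL : γ * L ≤ 1 := (le_div_iff₀ hL).mp hγ1
  have hγL0 : 0 < γ * L := mul_pos hγ0 hL
  have hB : 1 ≤ B := by
    rw [hBdef]
    have : 2 / (γ * L) ≥ 2 / 1 := by
      apply div_le_div_of_nonneg_left (by norm_num) hγL0 hγL
    simp at this
    linarith
  -- step for T = I - γ ∇d
  have hpq : p - q = (z - xstar) - w := by
    rw [hp, hq, hw, hΔ, smul_sub]
    abel
  have hwn : ‖w‖ ^ 2 = γ ^ 2 * ‖Δ‖ ^ 2 := by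
    rw [hw, norm_smul, Real.norm_of_nonneg hγ0.le]
    ring
  have hcoco := cocoercive d d' hconv hgrad L hL hlip z xstar
  have hinner : γ * (1 / L) * ‖Δ‖ ^ 2 ≤ ⟪z - xstar, w⟫ := by
    rw [hw, real_inner_smul_right]
    have := mul_le_mul_of_nonneg_left hcoco hγ0.le
    calc γ * (1 / L) * ‖Δ‖ ^ 2 = γ * (1 / L * ‖d' z - d' xstar‖ ^ 2) := by rw [hΔ]; ring
      _ ≤ γ * ⟪z - xstar, d' z - d' xstar⟫ := this
      _ = γ * ⟪z - xstar, Δ⟫ := by rw [hΔ]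
  have hT : ‖p - q‖ ^ 2 + B * ‖w‖ ^ 2 ≤ ‖z - xstar‖ ^ 2 := by
    rw [hpq, norm_sub_sq_real]
    have hBw : B * ‖w‖ ^ 2 = (2 * γ / L - γ ^ 2) * ‖Δ‖ ^ 2 := by
      rw [hwn, hBdef]
      field_simp
    have h2 : 2 * ⟪z - xstar, w⟫ ≥ 2 * γ / L * ‖Δ‖ ^ 2 := by
      calc 2 * γ / L * ‖Δ‖ ^ 2 = 2 * (γ * (1 / L) * ‖Δ‖ ^ 2) := by ring
        _ ≤ 2 * ⟪z - xstar, w⟫ := by linarith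
    have h3 : ‖w‖ ^ 2 + B * ‖w‖ ^ 2 = 2 * γ / L * ‖Δ‖ ^ 2 := by
      rw [hwn, hBdef]
      field_simp
      ring
    set I := ⟪z - xstar, w⟫ with hI
    clear_value B I w Δ p q
    linarith
  -- step for D
  set c := (p - q) - (F p - F q) with hc
  set u := (p - q) - (P z - xstar) with hu
  have hPzD : P z - xstar = (p - q) - θ • c := by
    have h1 : P z = D p := hP z
    have h2 : xstar = D q := by rw [← hfix, hP xstar]
    rw [h1, h2, hDF p, hDF q, hc]
    rw [smul_sub, smul_sub, smul_sub]
    module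
  have huc : u = θ • c := by rw [hu, hPzD]; abel
  have hnec : ‖c‖ ^ 2 ≤ 2 * ⟪p - q, c⟫ := by
    have h1 : ‖(p - q) - c‖ ≤ ‖p - q‖ := by
      rw [hc, show p - q - (p - q - (F p - F q)) = F p - F q by abel]
      exact hF p q
    have h2 : ‖(p - q) - c‖ ^ 2 ≤ ‖p - q‖ ^ 2 := by
      nlinarith [norm_nonneg ((p - q) - c), norm_nonneg (p - q)]
    rw [norm_sub_sq_real] at h2
    linarith
  have hDstep : ‖P z - xstar‖ ^ 2 + (1 - θ) / θ * ‖u‖ ^ 2 ≤ ‖p - q‖ ^ 2 := by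
    rw [hPzD, norm_sub_sq_real, huc, norm_smul, real_inner_smul_right,
      Real.norm_of_nonneg hθ0.le]
    have key : (1 - θ) / θ * (θ * ‖c‖) ^ 2 = θ * (1 - θ) * ‖c‖ ^ 2 := by
      field_simp
    rw [key]
    nlinarith [hnec, mul_pos hθ0 (by linarith : (0:ℝ) < 1 - θ)]
  -- combine
  have hr : z - P z = u + w := by
    rw [hu, hpq]
    abel
  have htri : ‖z - P z‖ ≤ ‖u‖ + ‖w‖ := by rw [hr]; exact norm_add_le u w
  have hsq : ‖z - P z‖ ^ 2 ≤ (‖u‖ + ‖w‖) ^ 2 := by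
    nlinarith [norm_nonneg (z - P z), norm_nonneg u, norm_nonneg w]
  have hcomb : (1 - θ) * ‖z - P z‖ ^ 2 ≤ (1 - θ) / θ * ‖u‖ ^ 2 + B * ‖w‖ ^ 2 := by
    have key : θ * ((1 - θ) * ‖z - P z‖ ^ 2) ≤ (1 - θ) * ‖u‖ ^ 2 + θ * (B * ‖w‖ ^ 2) := by
      nlinarith [sq_nonneg ((1 - θ) * ‖u‖ - θ * ‖w‖), hsq, norm_nonneg u, norm_nonneg w,
        sq_nonneg ‖w‖, mul_pos hθ0 (by linarith : (0:ℝ) < 1 - θ),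
        mul_nonneg (mul_nonneg hθ0.le (sq_nonneg ‖w‖)) (by linarith : (0:ℝ) ≤ B - 1)]
    have hA2 : θ * ((1 - θ) / θ * ‖u‖ ^ 2 + B * ‖w‖ ^ 2)
        = (1 - θ) * ‖u‖ ^ 2 + θ * (B * ‖w‖ ^ 2) := by
      field_simp
    rw [← hA2] at key
    exact le_of_mul_le_mul_left key hθ0
  clear_value B w Δ p q c u
  linarith

theorem pnp_ista_convergence {n : ℕ}
    (d : EuclideanSpace ℝ (Fin n) → ℝ)
    (d' : EuclideanSpace ℝ (Fin n) → EuclideanSpace ℝ (Fin n))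
    (hconv : ConvexOn ℝ Set.univ d)
    (hgrad : ∀ x, HasGradientAt d (d' x) x)
    (L : ℝ) (hL : 0 < L)
    (hlip : ∀ x y, ‖d' x - d' y‖ ≤ L * ‖x - y‖)
    (θ : ℝ) (hθ : θ ∈ Set.Ioo (0:ℝ) 1)
    (D : EuclideanSpace ℝ (Fin n) → EuclideanSpace ℝ (Fin n)) (hD : Averaged θ D)
    (γ : ℝ) (hγ : γ ∈ Set.Ioc 0 (1/L))
    (P : EuclideanSpace ℝ (Fin n) → EuclideanSpace ℝ (Fin n))
    (hP : ∀ x, P x = D (x - γ • d' x))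
    (xstar : EuclideanSpace ℝ (Fin n)) (hfix : P xstar = xstar)
    (x : ℕ → EuclideanSpace ℝ (Fin n)) (hiter : ∀ k, x (k+1) = P (x k))
    (t : ℕ) (ht : 1 ≤ t) :
    (1/(t:ℝ)) * ∑ k ∈ Finset.range t, ‖x k - P (x k)‖^2 ≤
      (2/(t:ℝ)) * ((1+θ)/(1-θ)) * ‖x 0 - xstar‖^2 := by
  have key := key_step d d' hconv hgrad L hL hlip θ hθ D hD γ hγ P hP xstar hfix
  obtain ⟨hθ0, hθ1⟩ := hθ
  have tele : ∀ m : ℕ, ‖x m - xstar‖ ^ 2 +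
      (1 - θ) * ∑ k ∈ Finset.range m, ‖x k - P (x k)‖ ^ 2 ≤ ‖x 0 - xstar‖ ^ 2 := by
    intro m
    induction m with
    | zero => simp
    | succ m ih =>
      rw [Finset.sum_range_succ, hiter m]
      have := key (x m)
      nlinarith [this, ih]
  have hS := tele t
  have hE : (0:ℝ) ≤ ‖x 0 - xstar‖ ^ 2 := sq_nonneg _
  have h1θ : 0 < 1 - θ := by linarith
  have h2 : (1 - θ) * ∑ k ∈ Finset.range t, ‖x k - P (x k)‖ ^ 2 ≤ ‖x 0 - xstar‖ ^ 2 := by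
    nlinarith [hS, sq_nonneg ‖x t - xstar‖]
  have hSle : ∑ k ∈ Finset.range t, ‖x k - P (x k)‖ ^ 2
      ≤ 2 * ((1 + θ) / (1 - θ)) * ‖x 0 - xstar‖ ^ 2 := by
    have hfrac : ∑ k ∈ Finset.range t, ‖x k - P (x k)‖ ^ 2 ≤ ‖x 0 - xstar‖ ^ 2 / (1 - θ) := by
      rw [le_div_iff₀ h1θ]
      nlinarith [h2]
    have hid : 2 * ((1 + θ) / (1 - θ)) * ‖x 0 - xstar‖ ^ 2 - ‖x 0 - xstar‖ ^ 2 / (1 - θ)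
        = (1 + 2 * θ) / (1 - θ) * ‖x 0 - xstar‖ ^ 2 := by
      field_simp
      ring
    have hpos : 0 ≤ (1 + 2 * θ) / (1 - θ) * ‖x 0 - xstar‖ ^ 2 :=
      mul_nonneg (div_nonneg (by linarith) h1θ.le) hE
    linarith
  have ht0 : (0:ℝ) < (t:ℝ) := by exact_mod_cast Nat.pos_of_ne_zero (by omega)
  calc (1/(t:ℝ)) * ∑ k ∈ Finset.range t, ‖x k - P (x k)‖^2
      ≤ (1/(t:ℝ)) * (2 * ((1 + θ) / (1 - θ)) * ‖x 0 - xstar‖ ^ 2) := by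
        apply mul_le_mul_of_nonneg_left hSle (by positivity)
    _ = (2/(t:ℝ)) * ((1+θ)/(1-θ)) * ‖x 0 - xstar‖^2 := by ring
end

section
/- If P : ℝⁿ → ℝⁿ is α-averaged with α ∈ (0,1) and has a fixed point, then for the iteration x^k = P(x^{k-1}), min_{1 ≤ k ≤ t} ‖x^{k-1} - P(x^{k-1})‖² ≤ (α/(1-α))·‖x⁰ - x*‖²/t, i.e., the minimal fixed-point residual decays at rate O(1/t). -/
lemma convex_sq_identity {n : ℕ} (α : ℝ) (a b : EuclideanSpace ℝ (Fin n)) :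
    ‖(1-α)•a + α•b‖^2 = (1-α)*‖a‖^2 + α*‖b‖^2 - α*(1-α)*‖a-b‖^2 := by
  simp only [← real_inner_self_eq_norm_sq]
  simp only [inner_add_add_self, inner_sub_sub_self, real_inner_smul_left, real_inner_smul_right]
  rw [real_inner_comm b a]
  ring

lemma averaged_decrease {n : ℕ} (α : ℝ) (hα : α ∈ Set.Ioo (0:ℝ) 1)
    (P : EuclideanSpace ℝ (Fin n) → EuclideanSpace ℝ (Fin n)) (hP : Averaged α P)
    (xstar : EuclideanSpace ℝ (Fin n)) (hfix : P xstar = xstar)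
    (y : EuclideanSpace ℝ (Fin n)) :
    ‖P y - xstar‖^2 ≤ ‖y - xstar‖^2 - ((1-α)/α) * ‖y - P y‖^2 := by
  obtain ⟨hα0, hα1⟩ := hα
  obtain ⟨F, hF, hD⟩ := hP
  have hFx : F xstar = xstar := by
    have h := hfix
    rw [hD xstar] at h
    have : α • F xstar = α • xstar := by
      have : (1 - α) • xstar + α • F xstar = (1 - α) • xstar + α • xstar := by
        rw [h]; module
      exact add_left_cancel this
    exact smul_right_injective _ (ne_of_gt hα0) this
  have hPy : P y - xstar = (1-α) • (y - xstar) + α • (F y - xstar) := by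
    rw [hD y]
    nth_rewrite 1 [show xstar = (1-α) • xstar + α • xstar by module]
    module
  have hid : ‖P y - xstar‖^2 = (1-α)*‖y - xstar‖^2 + α*‖F y - xstar‖^2
      - α*(1-α)*‖(y - xstar) - (F y - xstar)‖^2 := by
    rw [hPy]; exact convex_sq_identity α _ _
  have hne : ‖F y - xstar‖ ≤ ‖y - xstar‖ := by
    have := hF y xstar; rwa [hFx] at this
  have hsub : (y - xstar) - (F y - xstar) = y - F y := by abel
  have hyPy : y - P y = α • (y - F y) := by rw [hD y]; module
  have hnorm : ‖y - P y‖^2 = α^2 * ‖y - F y‖^2 := by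
    rw [hyPy, norm_smul, Real.norm_eq_abs, abs_of_pos hα0]; ring
  rw [hid, hsub]
  rw [hnorm]
  have h1 : ‖F y - xstar‖^2 ≤ ‖y - xstar‖^2 := by
    nlinarith [norm_nonneg (F y - xstar), norm_nonneg (y - xstar)]
  have hαne : α ≠ 0 := ne_of_gt hα0
  field_simp
  nlinarith [norm_nonneg (y - F y)]

theorem averaged_min_residual_rate {n : ℕ} (α : ℝ) (hα : α ∈ Set.Ioo (0:ℝ) 1)
    (P : EuclideanSpace ℝ (Fin n) → EuclideanSpace ℝ (Fin n)) (hP : Averaged α P)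
    (xstar : EuclideanSpace ℝ (Fin n)) (hfix : P xstar = xstar)
    (x : ℕ → EuclideanSpace ℝ (Fin n)) (hiter : ∀ k, x (k+1) = P (x k))
    (t : ℕ) (ht : 1 ≤ t) :
    ∃ k ∈ Finset.range t, ‖x k - P (x k)‖^2 ≤ (α/(1-α)) * ‖x 0 - xstar‖^2 / t := by
  obtain ⟨hα0, hα1⟩ := hα
  have hc : (0:ℝ) < (1-α)/α := div_pos (by linarith) hα0
  set r : ℕ → ℝ := fun k => ‖x k - P (x k)‖^2 with hr
  have hsum : ∀ m : ℕ, ‖x m - xstar‖^2 + ((1-α)/α) * ∑ k ∈ Finset.range m, r k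
      ≤ ‖x 0 - xstar‖^2 := by
    intro m
    induction m with
    | zero => simp
    | succ m ih =>
      have hdec := averaged_decrease α ⟨hα0, hα1⟩ P hP xstar hfix (x m)
      rw [Finset.sum_range_succ, hiter m]
      have : ‖P (x m) - xstar‖^2 ≤ ‖x m - xstar‖^2 - ((1-α)/α) * r m := hdec
      nlinarith
  have hS : ∑ k ∈ Finset.range t, r k ≤ (α/(1-α)) * ‖x 0 - xstar‖^2 := by
    have := hsum t
    have hn : 0 ≤ ‖x t - xstar‖^2 := sq_nonneg _
    rw [div_mul_eq_mul_div, le_div_iff₀ (by linarith : (0:ℝ) < 1 - α)]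
    have := mul_le_mul_of_nonneg_right (by linarith : ((1-α)/α) * ∑ k ∈ Finset.range t, r k ≤ ‖x 0 - xstar‖^2) (le_of_lt hα0)
    calc (∑ k ∈ Finset.range t, r k) * (1 - α)
        = ((1-α)/α) * (∑ k ∈ Finset.range t, r k) * α := by field_simp
      _ ≤ ‖x 0 - xstar‖^2 * α := this
      _ = α * ‖x 0 - xstar‖^2 := by ring
  obtain ⟨k, hk, hmin⟩ := Finset.exists_min_image (Finset.range t) r
    ⟨0, Finset.mem_range.mpr ht⟩
  refine ⟨k, hk, ?_⟩
  have hcard : (t : ℝ) * r k ≤ ∑ j ∈ Finset.range t, r j := by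
    have := Finset.card_nsmul_le_sum (Finset.range t) r (r k) (fun j hj => hmin j hj)
    simpa [nsmul_eq_mul] using this
  have ht0 : (0:ℝ) < t := by exact_mod_cast ht
  show r k ≤ α/(1-α) * ‖x 0 - xstar‖^2 / t
  rw [le_div_iff₀ ht0]
  calc r k * t = t * r k := by ring
    _ ≤ ∑ j ∈ Finset.range t, r j := hcard
    _ ≤ (α/(1-α)) * ‖x 0 - xstar‖^2 := hS
end

section
/- For θ ∈ (0,1), L > 0, and γ ∈ (0, 1/L], the quantity α = (θ + γL/2 - θγL)/(1 - θγL/2) satisfies α ∈ (0,1) and α/(1-α) ≤ 2(1+θ)/(1-θ). -/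
theorem averaged_constant_bound (θ L γ : ℝ) (hθ : θ ∈ Set.Ioo (0:ℝ) 1) (hL : 0 < L)
    (hγ : γ ∈ Set.Ioc 0 (1/L)) :
    (θ + γ*L/2 - θ*γ*L)/(1 - θ*γ*L/2) ∈ Set.Ioo (0:ℝ) 1 ∧
      ((θ + γ*L/2 - θ*γ*L)/(1 - θ*γ*L/2)) / (1 - (θ + γ*L/2 - θ*γ*L)/(1 - θ*γ*L/2)) ≤
        2 * (1+θ)/(1-θ) := by
  obtain ⟨hθ0, hθ1⟩ := hθ
  obtain ⟨hγ0, hγ1⟩ := hγ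
  have ht0 : 0 < γ * L := mul_pos hγ0 hL
  have ht1 : γ * L ≤ 1 := by
    rw [le_div_iff₀ hL] at hγ1; linarith
  have hden : 0 < 1 - θ*γ*L/2 := by nlinarith
  have hd : (1 - θ*γ*L/2) ≠ 0 := ne_of_gt hden
  have hnum : 0 < θ + γ*L/2 - θ*γ*L := by nlinarith
  set α : ℝ := (θ + γ*L/2 - θ*γ*L)/(1 - θ*γ*L/2) with hαdef
  have hm : α * (1 - θ*γ*L/2) = θ + γ*L/2 - θ*γ*L := div_mul_cancel₀ _ hd
  have hα1 : α < 1 := by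
    rw [hαdef, div_lt_one hden]; nlinarith
  have hα0 : 0 < α := div_pos hnum hden
  refine ⟨⟨hα0, hα1⟩, ?_⟩
  have h1α : 0 < 1 - α := by linarith
  rw [div_le_div_iff₀ h1α (sub_pos.mpr hθ1)]
  nlinarith [hm, mul_pos hden (sub_pos.mpr hθ1), mul_nonneg hα0.le ht0.le,
    mul_nonneg (mul_nonneg hα0.le hθ0.le) ht0.le]
end

section
/- Let d : ℝⁿ → ℝ be convex and differentiable, and D : ℝⁿ → ℝⁿ continuous. If (x*, z*, s*) satisfy z* = prox_{γd}(x* - s*), x* = D(z* + s*), and s* = s* + z* - x*, then z* = x*, s* = -γ∇d(x*), and x* = D(x* - γ∇d(x*)); i.e., every fixed point of PnP-ADMM is a fixed point of the operator P(x) = D(x - γ∇d(x)). -/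
theorem pnp_admm_fixed_point_is_pnp_ista_fixed_point {n : ℕ}
    (d : EuclideanSpace ℝ (Fin n) → ℝ)
    (d' : EuclideanSpace ℝ (Fin n) → EuclideanSpace ℝ (Fin n))
    (hconv : ConvexOn ℝ Set.univ d)
    (hgrad : ∀ x, HasGradientAt d (d' x) x)
    (γ : ℝ) (hγ : 0 < γ)
    (D : EuclideanSpace ℝ (Fin n) → EuclideanSpace ℝ (Fin n)) (hD : Continuous D)
    (xstar zstar sstar : EuclideanSpace ℝ (Fin n))
    (h1 : IsMinOn (fun u => (1/2) * ‖u - (xstar - sstar)‖^2 + γ * d u) Set.univ zstar)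
    (h2 : xstar = D (zstar + sstar))
    (h3 : sstar = sstar + zstar - xstar) :
    zstar = xstar ∧ sstar = -(γ • d' xstar) ∧ xstar = D (xstar - γ • d' xstar) := by
  have hzx : zstar = xstar := by
    have h : sstar + (zstar - xstar) = sstar + 0 := by
      conv_rhs => rw [h3]
      abel
    exact sub_eq_zero.mp (add_left_cancel h)
  subst hzx
  have hsub : HasFDerivAt (fun u : EuclideanSpace ℝ (Fin n) => u - (zstar - sstar))
      (ContinuousLinearMap.id ℝ _) zstar := by
    simpa using (hasFDerivAt_id zstar).sub_const (zstar - sstar)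
  have hns : HasFDerivAt (fun u : EuclideanSpace ℝ (Fin n) => ‖u - (zstar - sstar)‖ ^ 2)
      (2 • (innerSL ℝ (zstar - (zstar - sstar))).comp (ContinuousLinearMap.id ℝ _)) zstar :=
    hsub.norm_sq
  have hd : HasFDerivAt d ((InnerProductSpace.toDual ℝ _) (d' zstar)) zstar :=
    (hgrad zstar).hasFDerivAt
  have hf : HasFDerivAt (fun u => (1/2) * ‖u - (zstar - sstar)‖^2 + γ * d u)
      ((1/2 : ℝ) • (2 • (innerSL ℝ (zstar - (zstar - sstar))).comp (ContinuousLinearMap.id ℝ _))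
        + γ • ((InnerProductSpace.toDual ℝ _) (d' zstar))) zstar :=
    (hns.const_mul (1/2)).add (hd.const_mul γ)
  have hmin : IsLocalMin (fun u => (1/2) * ‖u - (zstar - sstar)‖^2 + γ * d u) zstar :=
    h1.isLocalMin (by simp)
  have hzero := hmin.hasFDerivAt_eq_zero hf
  set w := zstar - (zstar - sstar) + γ • d' zstar with hw
  have key : w = 0 := by
    have h := congrArg (fun L => L w) hzero
    simp only [ContinuousLinearMap.add_apply, ContinuousLinearMap.smul_apply,
      ContinuousLinearMap.coe_comp', Function.comp_apply, ContinuousLinearMap.coe_id',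
      id_eq, innerSL_apply_apply, InnerProductSpace.toDual_apply_apply, ContinuousLinearMap.zero_apply,
      smul_eq_mul] at h
    rw [nsmul_eq_mul] at h
    push_cast at h
    have h' : (inner ℝ w w : ℝ) = 0 := by
      rw [hw, inner_add_left, real_inner_smul_left]
      linarith
    exact inner_self_eq_zero.mp h'
  have hs : sstar = -(γ • d' zstar) := by
    rw [hw] at key
    have : zstar - (zstar - sstar) = sstar := by abel
    rw [this] at key
    linear_combination (norm := abel) key
  rw [hs] at h2
  refine ⟨rfl, hs, ?_⟩
  simpa [sub_eq_add_neg] using h2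
end

section
/- Let d : ℝⁿ → ℝ be convex and differentiable, γ > 0, and D continuous. If x* satisfies x* = D(x* - γ∇d(x*)), then setting z* = x* and s* = -γ∇d(x*) yields a fixed point of the PnP-ADMM updates: z* = prox_{γd}(x* - s*), x* = D(z* + s*), s* = s* + z* - x*. -/
open Filter Topology RealInnerProductSpace

lemma grad_convex_ineq {n : ℕ} (d : EuclideanSpace ℝ (Fin n) → ℝ)
    (hconv : ConvexOn ℝ Set.univ d) {x gx : EuclideanSpace ℝ (Fin n)}
    (hx : HasGradientAt d gx x) (u : EuclideanSpace ℝ (Fin n)) :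
    d x + ⟪gx, u - x⟫ ≤ d u := by
  set g : ℝ → ℝ := fun t => d (x + t • (u - x)) with hg
  have hcurve : HasDerivAt (fun t : ℝ => x + t • (u - x)) (u - x) 0 := by
    simpa using ((hasDerivAt_id (0:ℝ)).smul_const (u - x)).const_add x
  have hfd : HasFDerivAt d ((InnerProductSpace.toDual ℝ _) gx) (x + (0:ℝ) • (u - x)) := by
    simpa using hx.hasFDerivAt
  have hder : HasDerivAt g ⟪gx, u - x⟫ 0 := by
    have h := hfd.comp_hasDerivAt (0:ℝ) hcurve
    simp at h
    exact h
  have hslope : ∀ t ∈ Set.Ioc (0:ℝ) 1, slope g 0 t ≤ d u - d x := by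
    intro t ht
    have hc := hconv.2 (Set.mem_univ x) (Set.mem_univ u)
      (by linarith [ht.1, ht.2] : (0:ℝ) ≤ 1 - t) (le_of_lt ht.1) (by ring)
    have hxt : (1 - t) • x + t • u = x + t • (u - x) := by module
    rw [hxt] at hc
    have h2 : g t ≤ d x + t * (d u - d x) := by
      simp only [smul_eq_mul] at hc
      calc g t ≤ (1-t) * d x + t * d u := hc
        _ = d x + t * (d u - d x) := by ring
    have hg0 : g 0 = d x := by simp [hg]
    rw [slope_def_field, hg0]
    rw [div_le_iff₀ (by simpa using ht.1)]
    simp only [sub_zero]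
    linarith
  have htend : Tendsto (slope g 0) (𝓝[>] 0) (𝓝 ⟪gx, u - x⟫) :=
    (hasDerivAt_iff_tendsto_slope.mp hder).mono_left
      (nhdsWithin_mono _ (fun t ht => ne_of_gt ht))
  have hle : ⟪gx, u - x⟫ ≤ d u - d x := by
    refine le_of_tendsto htend ?_
    filter_upwards [Ioc_mem_nhdsGT_of_mem ⟨le_refl (0:ℝ), one_pos⟩] with t ht
    exact hslope t ht
  linarith

theorem pnp_ista_fixed_point_is_pnp_admm_fixed_point {n : ℕ}
    (d : EuclideanSpace ℝ (Fin n) → ℝ)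
    (d' : EuclideanSpace ℝ (Fin n) → EuclideanSpace ℝ (Fin n))
    (hconv : ConvexOn ℝ Set.univ d)
    (hgrad : ∀ x, HasGradientAt d (d' x) x)
    (γ : ℝ) (hγ : 0 < γ)
    (D : EuclideanSpace ℝ (Fin n) → EuclideanSpace ℝ (Fin n)) (hD : Continuous D)
    (xstar : EuclideanSpace ℝ (Fin n))
    (hfix : xstar = D (xstar - γ • d' xstar)) :
    IsMinOn (fun u => (1/2) * ‖u - (xstar - (-(γ • d' xstar)))‖^2 + γ * d u) Set.univ xstar ∧
      xstar = D (xstar + (-(γ • d' xstar))) ∧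
      (-(γ • d' xstar) : EuclideanSpace ℝ (Fin n)) = -(γ • d' xstar) + xstar - xstar := by
  refine ⟨?_, by simpa [sub_eq_add_neg] using hfix, by abel⟩
  intro u _
  simp only [Set.mem_setOf_eq]
  have key := grad_convex_ineq d hconv (hgrad xstar) u
  set g := d' xstar
  have hv : u - (xstar - (-(γ • g))) = (u - xstar) - γ • g := by abel
  have hv2 : xstar - (xstar - (-(γ • g))) = -(γ • g) := by abel
  rw [hv, hv2]
  have e1 : ‖(u - xstar) - γ • g‖^2
      = ‖u - xstar‖^2 - 2 * ⟪u - xstar, γ • g⟫ + ‖γ • g‖^2 := norm_sub_sq_real _ _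
  have e2 : ‖(-(γ • g) : EuclideanSpace ℝ (Fin n))‖^2 = ‖γ • g‖^2 := by rw [norm_neg]
  have e3 : ⟪u - xstar, γ • g⟫ = γ * ⟪g, u - xstar⟫ := by
    rw [real_inner_smul_right, real_inner_comm]
  have hkey : γ * ⟪g, u - xstar⟫ ≤ γ * (d u - d xstar) :=
    mul_le_mul_of_nonneg_left (by linarith) hγ.le
  have hn : (0:ℝ) ≤ ‖u - xstar‖^2 := sq_nonneg _
  rw [e1, e2, e3]
  nlinarith
end

section
/- On ℝ, let d be the Huber function (d(x) = x²/2 for |x| ≤ 1, d(x) = |x| - 1/2 otherwise) and let D_σ(z) = z + σ√c·sgn(z) for constants σ, c > 0. For any step size γ ∈ (0,1) and σ > γ/√c, the iterates z^{k} of z ↦ D_σ(z) followed by x ↦ x - γd'(x) satisfy |z^t| ≥ |z⁰| + t(σ√c - γ) for all t ∈ ℕ; hence the PnP-ISTA iteration diverges. -/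
/-- The sign function with the convention sgn(0) = 1. -/
noncomputable def sgn (z : ℝ) : ℝ := if z < 0 then -1 else 1

/-- Derivative of the Huber function: d'(x) = x for |x| ≤ 1 and d'(x) = sgn(x) for |x| > 1. -/
noncomputable def huberDeriv (x : ℝ) : ℝ := if |x| ≤ 1 then x else sgn x

/-- The counterexample denoiser D_σ(z) = z + σ√c·sgn(z). -/
noncomputable def Dden (σ c z : ℝ) : ℝ := z + σ * Real.sqrt c * sgn z

lemma key_step_s16 (σ c γ w : ℝ) (hγ0 : 0 < γ) (hγ1 : γ < 1)
    (hs : γ < σ * Real.sqrt c) :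
    |Dden σ c w - γ * huberDeriv (Dden σ c w)| ≥ |w| + (σ * Real.sqrt c - γ) := by
  set s := σ * Real.sqrt c with hsdef
  have hs0 : 0 < s := lt_trans hγ0 hs
  unfold Dden huberDeriv sgn
  rcases lt_or_ge w 0 with hw | hw
  · rw [if_pos hw]
    have hDneg : w + s * (-1) < 0 := by linarith
    have hwabs : |w| = -w := abs_of_neg hw
    rcases le_or_gt |w + s * (-1)| 1 with h1 | h1
    · rw [if_pos h1]
      have hDabs : |w + s * (-1)| = -(w + s * (-1)) := abs_of_neg hDneg
      rw [hDabs] at h1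
      have hexpr : w + s * (-1) - γ * (w + s * (-1)) = (1 - γ) * (w + s * (-1)) := by ring
      rw [hexpr, abs_of_neg (by nlinarith), hwabs]
      nlinarith
    · rw [if_neg (not_le.mpr h1), if_pos hDneg]
      rw [abs_of_neg hDneg] at h1
      rw [abs_of_neg (by linarith), hwabs]
      linarith
  · rw [if_neg (not_lt.mpr hw)]
    have hDpos : 0 < w + s * 1 := by linarith
    have hwabs : |w| = w := abs_of_nonneg hw
    rcases le_or_gt |w + s * 1| 1 with h1 | h1
    · rw [if_pos h1]
      have hDabs : |w + s * 1| = w + s * 1 := abs_of_pos hDpos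
      rw [hDabs] at h1
      have hexpr : w + s * 1 - γ * (w + s * 1) = (1 - γ) * (w + s * 1) := by ring
      rw [hexpr, abs_of_pos (by nlinarith), hwabs]
      nlinarith
    · rw [if_neg (not_le.mpr h1), if_neg (not_lt.mpr (le_of_lt hDpos))]
      rw [abs_of_pos hDpos] at h1
      rw [abs_of_pos (by linarith), hwabs]
      linarith

theorem pnp_ista_divergence (σ c γ : ℝ) (hσ : 0 < σ) (hc : 0 < c)
    (hγ : γ ∈ Set.Ioo (0:ℝ) 1) (hσγ : σ > γ / Real.sqrt c)
    (z : ℕ → ℝ)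
    (hiter : ∀ k, z (k+1) = Dden σ c (z k) - γ * huberDeriv (Dden σ c (z k))) :
    ∀ t : ℕ, |z t| ≥ |z 0| + t * (σ * Real.sqrt c - γ) := by
  obtain ⟨hγ0, hγ1⟩ := hγ
  have hsqrt : 0 < Real.sqrt c := Real.sqrt_pos.mpr hc
  have hs : γ < σ * Real.sqrt c := by
    exact (div_lt_iff₀ hsqrt).mp hσγ
  intro t
  induction t with
  | zero => simp
  | succ n ih =>
    have key := key_step_s16 σ c γ (z n) hγ0 hγ1 hs
    rw [← hiter n] at key
    push_cast
    linarith
end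

section
/- Let P : ℝⁿ → ℝⁿ be α-averaged with fixed point x*, and at each iteration k let x^k = P̂_k(x^{k-1}) where P̂_k is a random operator satisfying 𝔼[‖P̂_k(x) - P(x)‖² | x] ≤ ε² and 𝔼[‖P̂_k(x) - P(x)‖ | x] ≤ ε. Then for every t ≥ 1, 𝔼[(1/t)Σ_{k=1}^t ‖x^{k-1} - P(x^{k-1})‖²] ≤ (α/(1-α))·(ε² + 2ε‖x⁰ - x*‖ + ‖x⁰ - x*‖²/t). -/
open MeasureTheory
open RealInnerProductSpace

lemma avg_id {E : Type*} [NormedAddCommGroup E] [InnerProductSpace ℝ E] (α : ℝ) (a b : E) :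
    ‖(1-α)•a + α•b‖^2 = (1-α)*‖a‖^2 + α*‖b‖^2 - α*(1-α)*‖a-b‖^2 := by
  have h : ∀ v : E, ‖v‖^2 = ⟪v, v⟫ := fun v => (real_inner_self_eq_norm_sq v).symm
  rw [h, h, h, h]
  simp only [inner_add_left, inner_add_right, inner_sub_left, inner_sub_right,
    real_inner_smul_left, real_inner_smul_right, real_inner_comm a b]
  ring

lemma averaged_nonexpansive {n : ℕ} {α : ℝ} (hα : α ∈ Set.Ioo (0:ℝ) 1)
    {P : EuclideanSpace ℝ (Fin n) → EuclideanSpace ℝ (Fin n)} (hP : Averaged α P) :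
    Nonexpansive P := by
  obtain ⟨F, hF, hPF⟩ := hP
  intro x y
  have : P x - P y = (1-α) • (x - y) + α • (F x - F y) := by
    rw [hPF, hPF]; module
  rw [this]
  calc ‖(1-α) • (x - y) + α • (F x - F y)‖
      ≤ ‖(1-α) • (x - y)‖ + ‖α • (F x - F y)‖ := norm_add_le _ _
    _ = (1-α)*‖x-y‖ + α*‖F x - F y‖ := by
        rw [norm_smul, norm_smul, Real.norm_eq_abs, Real.norm_eq_abs,
          abs_of_pos (by linarith [hα.2]), abs_of_pos hα.1]
    _ ≤ (1-α)*‖x-y‖ + α*‖x-y‖ := by nlinarith [hF x y, hα.1]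
    _ = ‖x-y‖ := by ring

lemma fejer {n : ℕ} {α : ℝ} (hα : α ∈ Set.Ioo (0:ℝ) 1)
    {P : EuclideanSpace ℝ (Fin n) → EuclideanSpace ℝ (Fin n)} (hP : Averaged α P)
    {xs : EuclideanSpace ℝ (Fin n)} (hfix : P xs = xs) (x : EuclideanSpace ℝ (Fin n)) :
    ‖P x - xs‖^2 ≤ ‖x - xs‖^2 - ((1-α)/α) * ‖x - P x‖^2 := by
  obtain ⟨F, hF, hPF⟩ := hP
  have hα0 := hα.1
  have hα1 : (0:ℝ) < 1 - α := by linarith [hα.2]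
  have hFfix : F xs = xs := by
    have h0 := hPF xs
    rw [hfix] at h0
    have h2 : α • F xs = α • xs := by
      have h3 : (1 - α) • xs + α • F xs = (1 - α) • xs + α • xs := by
        rw [← h0]; module
      exact add_left_cancel h3
    exact smul_right_injective _ (ne_of_gt hα0) h2
  have hdecomp : P x - xs = (1-α) • (x - xs) + α • (F x - F xs) := by
    rw [hPF, hFfix]; module
  have hid := avg_id α (x - xs) (F x - F xs)
  have hab : (x - xs) - (F x - F xs) = x - F x := by rw [hFfix]; module
  have hxP : x - P x = α • (x - F x) := by rw [hPF]; module
  have hnxP : ‖x - P x‖^2 = α^2 * ‖x - F x‖^2 := by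
    rw [hxP, norm_smul, Real.norm_eq_abs, abs_of_pos hα0]; ring
  have hne : ‖F x - F xs‖^2 ≤ ‖x - xs‖^2 := by
    have := hF x xs
    nlinarith [norm_nonneg (F x - F xs)]
  rw [hdecomp, hid, hab]
  have : ((1-α)/α) * ‖x - P x‖^2 = α*(1-α)*‖x - F x‖^2 := by
    rw [hnxP]; field_simp
  rw [this]
  nlinarith

theorem stochastic_averaged_iteration_bound {n : ℕ}
    {Ω : Type*} [MeasurableSpace Ω] (μ : Measure Ω) [IsProbabilityMeasure μ]
    (α : ℝ) (hα : α ∈ Set.Ioo (0:ℝ) 1)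
    (P : EuclideanSpace ℝ (Fin n) → EuclideanSpace ℝ (Fin n)) (hP : Averaged α P)
    (xstar : EuclideanSpace ℝ (Fin n)) (hfix : P xstar = xstar)
    (ε : ℝ) (hε : 0 ≤ ε)
    (PHat : ℕ → Ω → EuclideanSpace ℝ (Fin n) → EuclideanSpace ℝ (Fin n))
    (x0 : EuclideanSpace ℝ (Fin n))
    (x : ℕ → Ω → EuclideanSpace ℝ (Fin n))
    (hx0 : ∀ ω, x 0 ω = x0)
    (hiter : ∀ k ω, x (k+1) ω = PHat (k+1) ω (x k ω))
    (hmeas : ∀ k, AEStronglyMeasurable (fun ω => x k ω) μ)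
    (hint2 : ∀ k, Integrable (fun ω => ‖PHat (k+1) ω (x k ω) - P (x k ω)‖^2) μ)
    (hint1 : ∀ k, Integrable (fun ω => ‖PHat (k+1) ω (x k ω) - P (x k ω)‖) μ)
    (herr2 : ∀ k, ∫ ω, ‖PHat (k+1) ω (x k ω) - P (x k ω)‖^2 ∂μ ≤ ε^2)
    (herr1 : ∀ k, ∫ ω, ‖PHat (k+1) ω (x k ω) - P (x k ω)‖ ∂μ ≤ ε)
    (hdist : ∀ k ω, ‖x k ω - xstar‖ ≤ ‖x0 - xstar‖)
    (t : ℕ) (ht : 1 ≤ t) :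
    ∫ ω, (1/(t:ℝ)) * ∑ k ∈ Finset.range t, ‖x k ω - P (x k ω)‖^2 ∂μ ≤
      (α/(1-α)) * (ε^2 + 2*ε*‖x0 - xstar‖ + ‖x0 - xstar‖^2/(t:ℝ)) := by
  have hα0 := hα.1
  have hα1 : (0:ℝ) < 1 - α := by linarith [hα.2]
  set B : ℝ := ‖x0 - xstar‖ with hBdef
  have hB : 0 ≤ B := norm_nonneg _
  have hPne := averaged_nonexpansive hα hP
  have hPcont : Continuous P := by
    have hlip : LipschitzWith 1 P :=
      LipschitzWith.of_dist_le_mul (fun a b => by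
        simpa [dist_eq_norm] using hPne a b)
    exact hlip.continuous
  have hmeasP : ∀ k, AEStronglyMeasurable (fun ω => P (x k ω)) μ :=
    fun k => hPcont.comp_aestronglyMeasurable (hmeas k)
  -- bound on ‖x k ω - P (x k ω)‖
  have hgb : ∀ k ω, ‖x k ω - P (x k ω)‖ ≤ 2*B := by
    intro k ω
    have h2 : ‖P (x k ω) - xstar‖ ≤ ‖x k ω - xstar‖ := by
      have := hPne (x k ω) xstar; rwa [hfix] at this
    have h3 : x k ω - P (x k ω) = (x k ω - xstar) - (P (x k ω) - xstar) := by module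
    rw [h3]
    calc ‖(x k ω - xstar) - (P (x k ω) - xstar)‖
        ≤ ‖x k ω - xstar‖ + ‖P (x k ω) - xstar‖ := norm_sub_le _ _
      _ ≤ 2*B := by have := hdist k ω; linarith
  -- integrability of g k
  have hg : ∀ k, Integrable (fun ω => ‖x k ω - P (x k ω)‖^2) μ := by
    intro k
    have hm : AEStronglyMeasurable (fun ω => ‖x k ω - P (x k ω)‖^2) μ := by
      have h1 := ((hmeas k).sub (hmeasP k)).norm
      simpa [pow_two, Pi.mul_def] using h1.mul h1
    apply Integrable.mono' (integrable_const ((2*B)^2)) hm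
    filter_upwards with ω
    rw [Real.norm_eq_abs, abs_of_nonneg (by positivity)]
    have := hgb k ω
    nlinarith [norm_nonneg (x k ω - P (x k ω))]
  -- integrability of f k
  have hf : ∀ k, Integrable (fun ω => ‖x k ω - xstar‖^2) μ := by
    intro k
    have hm : AEStronglyMeasurable (fun ω => ‖x k ω - xstar‖^2) μ := by
      have h1 := ((hmeas k).sub (aestronglyMeasurable_const : AEStronglyMeasurable (fun _ : Ω => xstar) μ)).norm
      simpa [pow_two, Pi.mul_def] using h1.mul h1
    apply Integrable.mono' (integrable_const (B^2)) hm
    filter_upwards with ω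
    rw [Real.norm_eq_abs, abs_of_nonneg (by positivity)]
    have := hdist k ω
    nlinarith [norm_nonneg (x k ω - xstar)]
  -- pointwise key inequality
  have key : ∀ k ω, ‖x (k+1) ω - xstar‖^2 + ((1-α)/α) * ‖x k ω - P (x k ω)‖^2 ≤
      ‖x k ω - xstar‖^2 + (2*B*‖PHat (k+1) ω (x k ω) - P (x k ω)‖ +
        ‖PHat (k+1) ω (x k ω) - P (x k ω)‖^2) := by
    intro k ω
    set y := PHat (k+1) ω (x k ω)
    set p := P (x k ω)
    set e := ‖y - p‖ with hedef
    have he : 0 ≤ e := norm_nonneg _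
    have h1 : ‖x (k+1) ω - xstar‖ ≤ ‖p - xstar‖ + e := by
      rw [hiter k ω]
      have : y - xstar = (p - xstar) + (y - p) := by module
      rw [this]; exact norm_add_le _ _
    have h2 := fejer hα hP hfix (x k ω)
    have h3 : ‖p - xstar‖ ≤ B := by
      have := hPne (x k ω) xstar; rw [hfix] at this
      exact le_trans this (hdist k ω)
    have h4 : 0 ≤ ‖p - xstar‖ := norm_nonneg _
    have h5 : 0 ≤ ‖x (k+1) ω - xstar‖ := norm_nonneg _
    nlinarith [h1, h2, h3, he]
  -- integrated per-step inequality
  have Ik : ∀ k, ∫ ω, ‖x (k+1) ω - xstar‖^2 ∂μ + ((1-α)/α) * ∫ ω, ‖x k ω - P (x k ω)‖^2 ∂μ ≤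
      ∫ ω, ‖x k ω - xstar‖^2 ∂μ + (2*B*ε + ε^2) := by
    intro k
    have hLint : Integrable (fun ω => ‖x (k+1) ω - xstar‖^2 + ((1-α)/α) * ‖x k ω - P (x k ω)‖^2) μ :=
      (hf (k+1)).add ((hg k).const_mul _)
    have hRint : Integrable (fun ω => ‖x k ω - xstar‖^2 +
        (2*B*‖PHat (k+1) ω (x k ω) - P (x k ω)‖ + ‖PHat (k+1) ω (x k ω) - P (x k ω)‖^2)) μ :=
      (hf k).add (((hint1 k).const_mul _).add (hint2 k))
    have hmono := integral_mono hLint hRint (fun ω => key k ω)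
    have hi1 : Integrable (fun ω => 2*B*‖PHat (k+1) ω (x k ω) - P (x k ω)‖) μ :=
      (hint1 k).const_mul (2*B)
    have hi2 := hint2 k
    have hi12 : Integrable (fun ω => 2*B*‖PHat (k+1) ω (x k ω) - P (x k ω)‖ +
        ‖PHat (k+1) ω (x k ω) - P (x k ω)‖^2) μ := hi1.add hi2
    rw [integral_add (hf (k+1)) ((hg k).const_mul ((1-α)/α)), integral_const_mul,
      integral_add (hf k) hi12, integral_add hi1 hi2, integral_const_mul] at hmono
    have h1 := herr1 k
    have h2 := herr2 k
    nlinarith [hmono]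
  -- sum over k
  set S : ℝ := ∑ k ∈ Finset.range t, ∫ ω, ‖x k ω - P (x k ω)‖^2 ∂μ with hSdef
  have hsum : ((1-α)/α) * S ≤ B^2 + t*(2*B*ε + ε^2) := by
    have hstep : ∀ k ∈ Finset.range t, ((1-α)/α) * ∫ ω, ‖x k ω - P (x k ω)‖^2 ∂μ ≤
        (∫ ω, ‖x k ω - xstar‖^2 ∂μ - ∫ ω, ‖x (k+1) ω - xstar‖^2 ∂μ) + (2*B*ε + ε^2) := by
      intro k _
      have := Ik k
      linarith
    have h1 : ((1-α)/α) * S ≤ ∑ k ∈ Finset.range t,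
        ((∫ ω, ‖x k ω - xstar‖^2 ∂μ - ∫ ω, ‖x (k+1) ω - xstar‖^2 ∂μ) + (2*B*ε + ε^2)) := by
      rw [hSdef, Finset.mul_sum]
      exact Finset.sum_le_sum hstep
    rw [Finset.sum_add_distrib, Finset.sum_range_sub' (fun k => ∫ ω, ‖x k ω - xstar‖^2 ∂μ),
      Finset.sum_const, Finset.card_range, nsmul_eq_mul] at h1
    have hA0 : ∫ ω, ‖x 0 ω - xstar‖^2 ∂μ = B^2 := by
      simp only [hx0]
      rw [integral_const]
      simp
      rfl
    have hAt : 0 ≤ ∫ ω, ‖x t ω - xstar‖^2 ∂μ :=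
      integral_nonneg (fun ω => by positivity)
    rw [hA0] at h1
    linarith
  -- put everything together
  have htpos : (0:ℝ) < t := by exact_mod_cast ht
  have hconv : ∫ ω, (1/(t:ℝ)) * ∑ k ∈ Finset.range t, ‖x k ω - P (x k ω)‖^2 ∂μ = (1/(t:ℝ)) * S := by
    rw [integral_const_mul, hSdef]
    congr 1
    exact integral_finset_sum _ (fun k _ => hg k)
  rw [hconv]
  have hc : (0:ℝ) < (1-α)/α := by positivity
  have h1 : S ≤ (α/(1-α)) * (B^2 + t*(2*B*ε + ε^2)) := by
    rw [← mul_le_mul_iff_right₀ hc]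
    have heq : (1-α)/α * ((α/(1-α)) * (B^2 + t*(2*B*ε + ε^2))) = B^2 + t*(2*B*ε + ε^2) := by
      field_simp
    rw [heq]
    exact hsum
  calc (1/(t:ℝ)) * S ≤ (1/(t:ℝ)) * ((α/(1-α)) * (B^2 + t*(2*B*ε + ε^2))) := by
        apply mul_le_mul_of_nonneg_left h1 (by positivity)
    _ = (α/(1-α)) * (ε^2 + 2*ε*B + B^2/(t:ℝ)) := by
        field_simp
        ring
end
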